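/- arXiv:2206.04743 — 6 statements merged into one kernel-verified Lean document; each statement's English description precedes it below -/
import Mathlib

section
/- Let D0 and D1 be discrete probability distributions on the real numbers (probability mass functions supported on a countable subset of ℝ) with finite second moments and means μ0 and μ1 respectively, and let D = (D0 + D1)/2 denote their uniform mixture. If D has positive variance Var(D), then JSD(D0 ‖ D1) ≥ (μ0 − μ1)² / (8 · Var(D)). -/
/-!
Write `p, q` for `D0, D1`. Since `∑ p = ∑ q`, the mean gap is `μ0 - μ1 = ∑ (p - q)(x - μ)`,
so Cauchy–Schwarz bounds its square by `Δ · ∑ (p + q)(x - μ)² = 2V · Δ`, where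
`Δ = ∑ (p - q)² / (p + q)` is the triangular discrimination. Pointwise, writing
`p = m(1 + t)`, `q = m(1 - t)` with `m = (p + q)/2`, the Jensen–Shannon summand is
`m((1 + t) log(1 + t) + (1 - t) log(1 - t))/2 ≥ m t²/2 = (p - q)²/(4(p + q))`, the inequality
`(1 + t) log(1 + t) + (1 - t) log(1 - t) ≥ t²` coming from `log(1 + t) - log(1 - t) ≥ 2t`.
Hence `Δ ≤ 4 · JSD`.
-/

open Real Set

theorem two_mul_le_log_one_add_sub_log_one_sub {t : ℝ} (ht₀ : 0 ≤ t) (ht₁ : t < 1) :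
    2 * t ≤ log (1 + t) - log (1 - t) := by
  have h := hasSum_log_sub_log_of_abs_lt_one (abs_lt.2 ⟨by linarith, ht₁⟩)
  simpa using le_hasSum h 0 fun k _ ↦ by positivity

theorem sq_le_one_add_mul_log_add_one_sub_mul_log {t : ℝ} (ht : |t| ≤ 1) :
    t ^ 2 ≤ (1 + t) * log (1 + t) + (1 - t) * log (1 - t) := by
  wlog ht₀ : 0 ≤ t generalizing t
  · have h := this (t := -t) (by rwa [abs_neg]) (by linarith)
    rw [neg_sq, sub_neg_eq_add, ← sub_eq_add_neg] at h
    linarith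
  set ψ : ℝ → ℝ := fun s ↦ (1 + s) * log (1 + s) + (1 - s) * log (1 - s) - s ^ 2
  have hψ : MonotoneOn ψ (Icc 0 1) := by
    refine monotoneOn_of_hasDerivWithinAt_nonneg (convex_Icc 0 1)
      (f' := fun s ↦ log (1 + s) - log (1 - s) - 2 * s) ?_ ?_ ?_
    · exact ((continuous_mul_log.comp (continuous_const.add continuous_id)).add
        (continuous_mul_log.comp (continuous_const.sub continuous_id))).sub
        (continuous_pow 2) |>.continuousOn
    · rw [interior_Icc]
      rintro s ⟨hs₀, hs₁⟩
      have hplus := (hasDerivAt_mul_log (x := 1 + s) (by linarith)).comp s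
        ((hasDerivAt_id s).const_add 1)
      have hminus := (hasDerivAt_mul_log (x := 1 - s) (by linarith)).comp s
        ((hasDerivAt_id s).const_sub 1)
      exact (((hplus.add hminus).sub (hasDerivAt_pow 2 s)).congr_deriv
        (by norm_num; ring)).hasDerivWithinAt
    · rw [interior_Icc]
      rintro s ⟨hs₀, hs₁⟩
      linarith [two_mul_le_log_one_add_sub_log_one_sub hs₀.le hs₁]
  have h := hψ (left_mem_Icc.2 zero_le_one) ⟨ht₀, (abs_le.1 ht).2⟩ ht₀
  norm_num [ψ] at h
  linarith

theorem sq_sub_div_add_le_two_mul_mul_log_add_mul_log {a b : ℝ} (ha : 0 ≤ a) (hb : 0 ≤ b) :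
    (a - b) ^ 2 / (a + b) ≤
      2 * (a * log (a / ((a + b) / 2)) + b * log (b / ((a + b) / 2))) := by
  rcases (add_nonneg ha hb).eq_or_lt with hab | hab
  · obtain ⟨rfl, rfl⟩ : a = 0 ∧ b = 0 := ⟨by linarith, by linarith⟩
    simp
  obtain ⟨t, hts⟩ : ∃ t, (a + b) * t = a - b := ⟨(a - b) / (a + b), by field_simp⟩
  have ht : |t| ≤ 1 := abs_le.2 ⟨by nlinarith, by nlinarith⟩
  have hta : a / ((a + b) / 2) = 1 + t := by
    rw [div_eq_iff (by positivity)]; linear_combination (-1 / 2) * hts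
  have htb : b / ((a + b) / 2) = 1 - t := by
    rw [div_eq_iff (by positivity)]; linear_combination (1 / 2) * hts
  have hlhs : (a - b) ^ 2 / (a + b) = (a + b) * t ^ 2 := by
    rw [div_eq_iff hab.ne', ← hts]; ring
  rw [hta, htb, hlhs]
  calc (a + b) * t ^ 2
      ≤ (a + b) * ((1 + t) * log (1 + t) + (1 - t) * log (1 - t)) :=
        mul_le_mul_of_nonneg_left (sq_le_one_add_mul_log_add_one_sub_mul_log ht) hab.le
    _ = 2 * (a * log (1 + t) + b * log (1 - t)) := by
        linear_combination (log (1 + t) - log (1 - t)) * hts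

theorem abs_mul_log_div_midpoint_le {a b : ℝ} (ha : 0 ≤ a) (hb : 0 ≤ b) :
    |a * log (a / ((a + b) / 2))| ≤ a + b := by
  rcases ha.eq_or_lt with rfl | ha
  · simpa using hb
  have hr : 0 < a / ((a + b) / 2) := by positivity
  have hupper : log (a / ((a + b) / 2)) ≤ a / ((a + b) / 2) - 1 := log_le_sub_one_of_pos hr
  have hlower : 1 - (a / ((a + b) / 2))⁻¹ ≤ log (a / ((a + b) / 2)) :=
    one_sub_inv_le_log_of_pos hr
  rw [inv_div] at hlower
  rw [abs_le]
  constructor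
  · nlinarith [mul_le_mul_of_nonneg_left hlower ha.le, mul_div_cancel₀ ((a + b) / 2) ha.ne']
  · have hr₂ : a / ((a + b) / 2) ≤ 2 := by rw [div_le_iff₀ (by positivity)]; linarith
    nlinarith [mul_le_mul_of_nonneg_left hupper ha.le]

section Summation

variable {ι : Type*}

theorem Summable.of_sq_le_mul {r f g : ι → ℝ} (hf₀ : ∀ i, 0 ≤ f i) (hg₀ : ∀ i, 0 ≤ g i)
    (hrfg : ∀ i, r i ^ 2 ≤ f i * g i) (hf : Summable f) (hg : Summable g) : Summable r := by
  refine Summable.of_norm_bounded ((hf.add hg).div_const 2) fun i ↦ ?_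
  rw [Real.norm_eq_abs]
  refine abs_le_of_sq_le_sq ?_ (by linarith [hf₀ i, hg₀ i])
  nlinarith [hrfg i, sq_nonneg (f i - g i)]

theorem sq_tsum_le_tsum_mul_tsum_of_sq_le_mul {r f g : ι → ℝ} (hf₀ : ∀ i, 0 ≤ f i)
    (hg₀ : ∀ i, 0 ≤ g i) (hrfg : ∀ i, r i ^ 2 ≤ f i * g i) (hf : Summable f)
    (hg : Summable g) : (∑' i, r i) ^ 2 ≤ (∑' i, f i) * ∑' i, g i := by
  have hr := Summable.of_sq_le_mul hf₀ hg₀ hrfg hf hg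
  have hquad : ∀ c, 0 ≤ (∑' i, f i) * (c * c) + (2 * ∑' i, r i) * c + ∑' i, g i := by
    intro c
    refine HasSum.nonneg (fun i ↦ ?_)
      (((hf.hasSum.mul_right (c * c)).add ((hr.hasSum.mul_left 2).mul_right c)).add hg.hasSum)
    rcases (hf₀ i).eq_or_lt with hfi | hfi
    · have : r i = 0 := pow_eq_zero_iff two_ne_zero |>.1 <|
        le_antisymm (by simpa [← hfi] using hrfg i) (sq_nonneg _)
      simp [← hfi, this, hg₀ i]
    · nlinarith [hrfg i, sq_nonneg (f i * c + r i)]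
  have := discrim_le_zero hquad
  rw [discrim] at this
  linarith

theorem summable_mul_of_summable_sq_mul {f w : ι → ℝ} (hw₀ : ∀ i, 0 ≤ w i)
    (hw : Summable w) (hfw : Summable fun i ↦ f i ^ 2 * w i) : Summable fun i ↦ f i * w i :=
  Summable.of_sq_le_mul (fun i ↦ mul_nonneg (sq_nonneg _) (hw₀ i)) hw₀
    (fun i ↦ le_of_eq (by ring)) hfw hw

end Summation

section Divergence

variable {α : Type*} {p q : α → ℝ}

theorem summable_sq_sub_div_add (hp : ∀ x, 0 ≤ p x) (hq : ∀ x, 0 ≤ q x) (hps : Summable p)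
    (hqs : Summable q) : Summable fun x ↦ (p x - q x) ^ 2 / (p x + q x) := by
  refine Summable.of_nonneg_of_le (fun x ↦ div_nonneg (sq_nonneg _) (add_nonneg (hp x) (hq x)))
    (fun x ↦ div_le_of_le_mul₀ (add_nonneg (hp x) (hq x)) (add_nonneg (hp x) (hq x)) ?_)
    (hps.add hqs)
  nlinarith [mul_nonneg (hp x) (hq x)]

theorem tsum_sq_sub_div_add_le (hp : ∀ x, 0 ≤ p x) (hq : ∀ x, 0 ≤ q x) (hps : Summable p)
    (hqs : Summable q) :
    ∑' x, (p x - q x) ^ 2 / (p x + q x) ≤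
      2 * (∑' x, p x * log (p x / ((p x + q x) / 2)) +
        ∑' x, q x * log (q x / ((p x + q x) / 2))) := by
  have hpl : Summable fun x ↦ p x * log (p x / ((p x + q x) / 2)) :=
    Summable.of_norm_bounded (hps.add hqs) fun x ↦ abs_mul_log_div_midpoint_le (hp x) (hq x)
  have hql : Summable fun x ↦ q x * log (q x / ((p x + q x) / 2)) := by
    refine Summable.of_norm_bounded (hps.add hqs) fun x ↦ ?_
    simpa only [Real.norm_eq_abs, add_comm (q x)] using abs_mul_log_div_midpoint_le (hq x) (hp x)
  rw [← hpl.tsum_add hql, ← tsum_mul_left]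
  exact (summable_sq_sub_div_add hp hq hps hqs).tsum_le_tsum
    (fun x ↦ sq_sub_div_add_le_two_mul_mul_log_add_mul_log (hp x) (hq x))
    ((hpl.add hql).mul_left 2)

theorem sq_tsum_sub_mul_le (hp : ∀ x, 0 ≤ p x) (hq : ∀ x, 0 ≤ q x) (hps : Summable p)
    (hqs : Summable q) {f : α → ℝ} (hf : Summable fun x ↦ (p x + q x) * f x ^ 2) :
    (∑' x, (p x - q x) * f x) ^ 2 ≤
      (∑' x, (p x - q x) ^ 2 / (p x + q x)) * ∑' x, (p x + q x) * f x ^ 2 := by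
  refine sq_tsum_le_tsum_mul_tsum_of_sq_le_mul
    (fun x ↦ div_nonneg (sq_nonneg _) (add_nonneg (hp x) (hq x)))
    (fun x ↦ mul_nonneg (add_nonneg (hp x) (hq x)) (sq_nonneg _)) (fun x ↦ ?_)
    (summable_sq_sub_div_add hp hq hps hqs) hf
  rcases (add_nonneg (hp x) (hq x)).eq_or_lt with hpq | hpq
  · obtain ⟨hpx, hqx⟩ : p x = 0 ∧ q x = 0 := ⟨by linarith [hp x, hq x], by linarith [hp x, hq x]⟩
    simp [hpx, hqx]
  · exact le_of_eq (by field_simp)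

end Divergence

theorem jsd_ge_mean_gap_sq_div_variance_general
    (D0 D1 : ℝ → ℝ)
    (h0nn : ∀ x, 0 ≤ D0 x) (h1nn : ∀ x, 0 ≤ D1 x)
    (h0sum : HasSum D0 1) (h1sum : HasSum D1 1)
    (h0mom : Summable (fun x => x ^ 2 * D0 x))
    (h1mom : Summable (fun x => x ^ 2 * D1 x))
    (μ0 μ1 μ V JSD : ℝ)
    (hμ0 : μ0 = ∑' x : ℝ, x * D0 x)
    (hμ1 : μ1 = ∑' x : ℝ, x * D1 x)
    (hV : V = ∑' x : ℝ, (x - μ) ^ 2 * ((D0 x + D1 x) / 2))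
    (hJSD : JSD = (1/2) * ∑' x : ℝ, D0 x * Real.log (D0 x / ((D0 x + D1 x) / 2))
                + (1/2) * ∑' x : ℝ, D1 x * Real.log (D1 x / ((D0 x + D1 x) / 2)))
    (hVpos : 0 < V) :
    JSD ≥ (μ0 - μ1) ^ 2 / (8 * V) := by
  have hx0 := summable_mul_of_summable_sq_mul h0nn h0sum.summable h0mom
  have hx1 := summable_mul_of_summable_sq_mul h1nn h1sum.summable h1mom
  have hgap : ∑' x, (D0 x - D1 x) * (x - μ) = μ0 - μ1 := by
    refine (((hx0.hasSum.sub hx1.hasSum).sub ((h0sum.sub h1sum).mul_left μ)).congr_fun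
      fun x ↦ ?_).tsum_eq.trans ?_
    · ring
    · rw [hμ0, hμ1]; ring
  have hvar : Summable fun x ↦ (D0 x + D1 x) * (x - μ) ^ 2 :=
    (((h0mom.add h1mom).sub ((hx0.add hx1).mul_left (2 * μ))).add
      ((h0sum.summable.add h1sum.summable).mul_left (μ ^ 2))).congr fun x ↦ by ring
  have hvar_eq : ∑' x, (D0 x + D1 x) * (x - μ) ^ 2 = 2 * V := by
    rw [hV, ← tsum_mul_left]
    exact tsum_congr fun x ↦ by ring
  have hCS := sq_tsum_sub_mul_le h0nn h1nn h0sum.summable h1sum.summable hvar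
  have hJ := tsum_sq_sub_div_add_le h0nn h1nn h0sum.summable h1sum.summable
  rw [hgap, hvar_eq] at hCS
  rw [ge_iff_le, div_le_iff₀ (by positivity)]
  calc (μ0 - μ1) ^ 2 ≤ _ := hCS
    _ ≤ 4 * JSD * (2 * V) := by gcongr; rw [hJSD]; linarith
    _ = JSD * (8 * V) := by ring

/-- Lemma (JSD lower bound): for discrete distributions `D0`, `D1` on `ℝ` with finite
second moments, means `μ0`, `μ1`, and uniform mixture `D = (D0 + D1)/2` with positive
variance, `JSD(D0 ‖ D1) ≥ (μ0 − μ1)² / (8 · Var(D))`. -/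
theorem jsd_ge_mean_gap_sq_div_variance
    (D0 D1 : ℝ → ℝ)
    (h0nn : ∀ x, 0 ≤ D0 x) (h1nn : ∀ x, 0 ≤ D1 x)
    (h0sum : HasSum D0 1) (h1sum : HasSum D1 1)
    (h0mom : Summable (fun x => x ^ 2 * D0 x))
    (h1mom : Summable (fun x => x ^ 2 * D1 x))
    (μ0 μ1 μ V JSD : ℝ)
    (hμ0 : μ0 = ∑' x : ℝ, x * D0 x)
    (hμ1 : μ1 = ∑' x : ℝ, x * D1 x)
    (hμ : μ = ∑' x : ℝ, x * ((D0 x + D1 x) / 2))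
    (hV : V = ∑' x : ℝ, (x - μ) ^ 2 * ((D0 x + D1 x) / 2))
    (hJSD : JSD = (1/2) * ∑' x : ℝ, D0 x * Real.log (D0 x / ((D0 x + D1 x) / 2))
                + (1/2) * ∑' x : ℝ, D1 x * Real.log (D1 x / ((D0 x + D1 x) / 2)))
    (hVpos : 0 < V) :
    JSD ≥ (μ0 - μ1) ^ 2 / (8 * V) :=
  jsd_ge_mean_gap_sq_div_variance_general D0 D1 h0nn h1nn h0sum h1sum h0mom h1mom μ0 μ1 μ V JSD hμ0
    hμ1 hV hJSD hVpos
end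

section
/- Let D0 and D1 be discrete probability distributions on the real numbers with finite second moments and means μ0 and μ1 respectively, and let D = (D0 + D1)/2 be their uniform mixture. Then (μ1 − μ0)² ≤ Var(D) · ∑_x (D1(x) − D0(x))² / D(x), where the sum ranges over all x in the support of D. -/
/-!
Since `D0` and `D1` have the same total mass, `μ1 - μ0 = ∑ₓ (x - μ) (D1 x - D0 x)` for every
centre `μ`. Splitting the summand as `((x - μ) √D(x)) · ((D1 x - D0 x) / √D(x))`, Cauchy–Schwarz
bounds its square by `Var(D) · ∑ₓ (D1 x - D0 x)² / D(x)`. Off the support of `D` both `D0` and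
`D1` vanish, so the summand is `0` there and the division by `0` is harmless.
-/

open Filter Topology

theorem tsum_sq_le_tsum_mul_tsum_of_sq_le_mul {ι : Type*} {r f g : ι → ℝ}
    (hf : ∀ i, 0 ≤ f i) (hg : ∀ i, 0 ≤ g i) (hrfg : ∀ i, r i ^ 2 ≤ f i * g i)
    (hfs : Summable f) (hgs : Summable g) :
    (∑' i, r i) ^ 2 ≤ (∑' i, f i) * ∑' i, g i := by
  -- `|r| ≤ √(f g) ≤ (f + g) / 2`
  have hrs : Summable r := by
    refine .of_norm_bounded ((hfs.add hgs).div_const 2) fun i => ?_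
    rw [Real.norm_eq_abs, ← sq_le_sq₀ (abs_nonneg _) (by linarith [hf i, hg i]), sq_abs]
    nlinarith [sq_nonneg (f i - g i), hrfg i]
  have hprod : Tendsto (fun s : Finset ι => (∑ i ∈ s, f i) * ∑ i ∈ s, g i) atTop
      (𝓝 ((∑' i, f i) * ∑' i, g i)) := Tendsto.mul hfs.hasSum hgs.hasSum
  exact le_of_tendsto_of_tendsto' (hrs.hasSum.pow 2) hprod fun s =>
    Finset.sum_sq_le_sum_mul_sum_of_sq_le_mul s (fun i _ => hf i) (fun i _ => hg i)
      fun i _ => hrfg i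

theorem summable_mul_of_summable_sq_mul_s3 {D : ℝ → ℝ} (hD : ∀ x, 0 ≤ D x) (hs : Summable D)
    (h2 : Summable fun x => x ^ 2 * D x) : Summable fun x => x * D x := by
  refine .of_norm_bounded (h2.add hs) fun x => ?_
  rw [Real.norm_eq_abs, abs_mul, abs_of_nonneg (hD x)]
  have : |x| ≤ x ^ 2 + 1 := by nlinarith [sq_abs x, sq_nonneg (|x| - 1)]
  nlinarith [hD x]

theorem summable_sub_sq_mul {D : ℝ → ℝ} (hD : ∀ x, 0 ≤ D x) (hs : Summable D)
    (h2 : Summable fun x => x ^ 2 * D x) (c : ℝ) : Summable fun x => (x - c) ^ 2 * D x := by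
  have h1 := summable_mul_of_summable_sq_mul_s3 hD hs h2
  refine ((h2.sub (h1.mul_left (2 * c))).add (hs.mul_left (c ^ 2))).congr fun x => ?_
  ring

theorem tsum_sub_mul_sub_eq {D0 D1 : ℝ → ℝ} {m : ℝ} (h0 : HasSum D0 m) (h1 : HasSum D1 m)
    (h0' : Summable fun x => x * D0 x) (h1' : Summable fun x => x * D1 x) (c : ℝ) :
    ∑' x, (x - c) * (D1 x - D0 x) = ∑' x, x * D1 x - ∑' x, x * D0 x := by
  have := ((h1'.hasSum.sub h0'.hasSum).sub ((h1.sub h0).mul_left c)).tsum_eq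
  rw [sub_self, mul_zero, sub_zero] at this
  rw [← this]
  congr 1 with x
  ring

theorem summable_sq_sub_div_avg {D0 D1 : ℝ → ℝ} (h0 : ∀ x, 0 ≤ D0 x) (h1 : ∀ x, 0 ≤ D1 x)
    (h0s : Summable D0) (h1s : Summable D1) :
    Summable fun x => (D1 x - D0 x) ^ 2 / ((D0 x + D1 x) / 2) := by
  refine .of_nonneg_of_le (fun x => by have := h0 x; have := h1 x; positivity) (fun x => ?_)
    ((h0s.add h1s).mul_left 2)
  rcases (add_nonneg (h0 x) (h1 x)).eq_or_lt with h | h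
  · rw [← h]; simp
  · rw [div_le_iff₀ (by positivity)]
    nlinarith [h0 x, h1 x]

theorem sq_mul_sub_le_mul_div_avg (x c : ℝ) {a b : ℝ} (ha : 0 ≤ a) (hb : 0 ≤ b) :
    ((x - c) * (b - a)) ^ 2 ≤ (x - c) ^ 2 * ((a + b) / 2) * ((b - a) ^ 2 / ((a + b) / 2)) := by
  rcases (add_nonneg ha hb).eq_or_lt with h | h
  · obtain ⟨rfl, rfl⟩ : a = 0 ∧ b = 0 := ⟨by linarith, by linarith⟩
    simp
  · rw [mul_assoc, mul_div_cancel₀ _ (by positivity)]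
    exact (mul_pow _ _ _).le

theorem mean_gap_sq_le_variance_mul_chi_sum_general
    (D0 D1 : ℝ → ℝ)
    (h0nn : ∀ x, 0 ≤ D0 x) (h1nn : ∀ x, 0 ≤ D1 x)
    (h0sum : HasSum D0 1) (h1sum : HasSum D1 1)
    (h0mom : Summable (fun x => x ^ 2 * D0 x))
    (h1mom : Summable (fun x => x ^ 2 * D1 x))
    (μ0 μ1 μ V : ℝ)
    (hμ0 : μ0 = ∑' x : ℝ, x * D0 x)
    (hμ1 : μ1 = ∑' x : ℝ, x * D1 x)
    (hV : V = ∑' x : ℝ, (x - μ) ^ 2 * ((D0 x + D1 x) / 2)) :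
    (μ1 - μ0) ^ 2 ≤ V * ∑' x : ℝ, (D1 x - D0 x) ^ 2 / ((D0 x + D1 x) / 2) := by
  set D : ℝ → ℝ := fun x => (D0 x + D1 x) / 2
  have hD : ∀ x, 0 ≤ D x := fun x => by have := h0nn x; have := h1nn x; positivity
  have hDs : Summable D := (h0sum.summable.add h1sum.summable).div_const 2
  have hD2 : Summable fun x => x ^ 2 * D x :=
    ((h0mom.add h1mom).div_const 2).congr fun x => by simp only [D]; ring
  have hgap : μ1 - μ0 = ∑' x, (x - μ) * (D1 x - D0 x) := by
    rw [hμ0, hμ1, tsum_sub_mul_sub_eq h0sum h1sum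
      (summable_mul_of_summable_sq_mul_s3 h0nn h0sum.summable h0mom)
      (summable_mul_of_summable_sq_mul_s3 h1nn h1sum.summable h1mom)]
  rw [hgap, hV]
  exact tsum_sq_le_tsum_mul_tsum_of_sq_le_mul (fun x => mul_nonneg (sq_nonneg _) (hD x))
    (fun x => div_nonneg (sq_nonneg _) (hD x))
    (fun x => sq_mul_sub_le_mul_div_avg x μ (h0nn x) (h1nn x))
    (summable_sub_sq_mul hD hDs hD2 μ)
    (summable_sq_sub_div_avg h0nn h1nn h0sum.summable h1sum.summable)

/-- For discrete distributions `D0`, `D1` on `ℝ` with finite second moments, means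
`μ0`, `μ1`, and uniform mixture `D = (D0 + D1)/2`,
`(μ1 − μ0)² ≤ Var(D) · ∑_x (D1(x) − D0(x))² / D(x)`
(terms outside the support of `D` contribute `0`, since there both `D0` and `D1` vanish). -/
theorem mean_gap_sq_le_variance_mul_chi_sum
    (D0 D1 : ℝ → ℝ)
    (h0nn : ∀ x, 0 ≤ D0 x) (h1nn : ∀ x, 0 ≤ D1 x)
    (h0sum : HasSum D0 1) (h1sum : HasSum D1 1)
    (h0mom : Summable (fun x => x ^ 2 * D0 x))
    (h1mom : Summable (fun x => x ^ 2 * D1 x))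
    (μ0 μ1 μ V : ℝ)
    (hμ0 : μ0 = ∑' x : ℝ, x * D0 x)
    (hμ1 : μ1 = ∑' x : ℝ, x * D1 x)
    (hμ : μ = ∑' x : ℝ, x * ((D0 x + D1 x) / 2))
    (hV : V = ∑' x : ℝ, (x - μ) ^ 2 * ((D0 x + D1 x) / 2)) :
    (μ1 - μ0) ^ 2 ≤ V * ∑' x : ℝ, (D1 x - D0 x) ^ 2 / ((D0 x + D1 x) / 2) :=
  mean_gap_sq_le_variance_mul_chi_sum_general D0 D1 h0nn h1nn h0sum h1sum h0mom h1mom μ0 μ1 μ V hμ0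
    hμ1 hV
end

section
/- Let (F_t)_{t=0,…,T} be a filtration on a probability space and let (P_t)_{t=0,…,T} be a supermartingale adapted to it such that 0 ≤ P_t ≤ 1 almost surely for every t and P_0 = 1/2 almost surely. Then ∑_{t=1}^{T} E[(P_t − E[P_t | F_{t−1}])²] ≤ 5/4. -/
/-!
With `Y_t = 1 - P_t`, a nonnegative submartingale, the conditional Pythagoras identity
`E[Y_t²] = E[E[Y_t | F_{t-1}]²] + E[(Y_t - E[Y_t | F_{t-1}])²]` and `0 ≤ Y_{t-1} ≤ E[Y_t | F_{t-1}]`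
bound the `t`-th summand by `E[Y_t²] - E[Y_{t-1}²]`. The sum telescopes to
`E[Y_T²] - E[Y_0²] ≤ 1 - 1/4`.
-/

open MeasureTheory ProbabilityTheory

section

variable {Ω : Type*} {m m₀ : MeasurableSpace Ω} {μ : Measure[m₀] Ω} [IsFiniteMeasure μ]
  {X Y : Ω → ℝ}

theorem condExp_const_sub (hm : m ≤ m₀) (hX : Integrable X μ) (c : ℝ) :
    μ[fun ω => c - X ω | m] =ᵐ[μ] fun ω => c - (μ[X | m]) ω := by
  filter_upwards [condExp_sub (integrable_const c) hX m] with ω hω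
  rw [condExp_const hm] at hω
  exact hω

theorem integral_sq_const_sub_sub_condExp (hm : m ≤ m₀) (hX : Integrable X μ) (c : ℝ) :
    ∫ ω, (c - X ω - (μ[fun ω => c - X ω | m]) ω) ^ 2 ∂μ
      = ∫ ω, (X ω - (μ[X | m]) ω) ^ 2 ∂μ := by
  refine integral_congr_ae ?_
  filter_upwards [condExp_const_sub hm hX c] with ω hω
  rw [hω]
  ring

theorem integral_sq_eq_integral_sq_condExp_add (hm : m ≤ m₀) (hX : MemLp X 2 μ) :
    ∫ ω, X ω ^ 2 ∂μ = ∫ ω, (μ[X | m]) ω ^ 2 ∂μ + ∫ ω, (X ω - (μ[X | m]) ω) ^ 2 ∂μ := by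
  have hvar : ∫ ω, (X ω - (μ[X | m]) ω) ^ 2 ∂μ = ∫ ω, (Var[X; μ | m]) ω ∂μ :=
    (integral_condExp hm).symm
  have hsq : Integrable (μ[X | m] ^ 2) μ := (hX.condExp one_le_two).integrable_sq
  rw [hvar, integral_congr_ae (condVar_ae_eq_condExp_sq_sub_sq_condExp hm hX),
    integral_sub' integrable_condExp hsq, integral_condExp hm]
  simp only [Pi.pow_apply]
  ring

theorem integral_sq_sub_condExp_le (hm : m ≤ m₀) (hX : MemLp X 2 μ) (hY : MemLp Y 2 μ)
    (hY₀ : 0 ≤ᵐ[μ] Y) (hYX : Y ≤ᵐ[μ] μ[X | m]) :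
    ∫ ω, (X ω - (μ[X | m]) ω) ^ 2 ∂μ ≤ ∫ ω, X ω ^ 2 ∂μ - ∫ ω, Y ω ^ 2 ∂μ := by
  have hsq : ∫ ω, Y ω ^ 2 ∂μ ≤ ∫ ω, (μ[X | m]) ω ^ 2 ∂μ := by
    refine integral_mono_ae hY.integrable_sq (hX.condExp one_le_two).integrable_sq ?_
    filter_upwards [hY₀, hYX] with ω h₀ h
    exact pow_le_pow_left₀ h₀ h 2
  linarith [integral_sq_eq_integral_sq_condExp_add hm hX]

end

theorem sum_Icc_le_sub_of_le_sub {a b : ℕ → ℝ} {T : ℕ}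
    (h : ∀ t, 1 ≤ t → t ≤ T → a t ≤ b t - b (t - 1)) :
    ∑ t ∈ Finset.Icc 1 T, a t ≤ b T - b 0 := by
  induction T with
  | zero => simp
  | succ T ih =>
    rw [Finset.sum_Icc_succ_top (Nat.le_add_left 1 T)]
    have hlast := h (T + 1) (Nat.le_add_left 1 T) le_rfl
    have hprev := ih fun t h₁ h₂ => h t h₁ (h₂.trans T.le_succ)
    simp only [Nat.add_sub_cancel] at hlast
    linarith

theorem sum_integral_sq_sub_condExp_le_of_le_condExp {Ω : Type*} {m₀ : MeasurableSpace Ω}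
    {μ : Measure[m₀] Ω} [IsFiniteMeasure μ] (ℱ : Filtration ℕ m₀) (Y : ℕ → Ω → ℝ) (T : ℕ)
    (hL2 : ∀ t ≤ T, MemLp (Y t) 2 μ) (hnonneg : ∀ t ≤ T, 0 ≤ᵐ[μ] Y t)
    (hsub : ∀ t, 1 ≤ t → t ≤ T → Y (t - 1) ≤ᵐ[μ] μ[Y t | ℱ (t - 1)]) :
    ∑ t ∈ Finset.Icc 1 T, ∫ ω, (Y t ω - (μ[Y t | ℱ (t - 1)]) ω) ^ 2 ∂μ
      ≤ ∫ ω, Y T ω ^ 2 ∂μ - ∫ ω, Y 0 ω ^ 2 ∂μ :=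
  sum_Icc_le_sub_of_le_sub (b := fun t => ∫ ω, Y t ω ^ 2 ∂μ) fun t h₁ h₂ =>
    integral_sq_sub_condExp_le (ℱ.le _) (hL2 t h₂) (hL2 _ (t.sub_le 1 |>.trans h₂))
      (hnonneg _ (t.sub_le 1 |>.trans h₂)) (hsub t h₁ h₂)

theorem supermartingale_sum_conditional_variances_le_general
    {Ω : Type*} [m : MeasurableSpace Ω] (μ : Measure Ω) [IsProbabilityMeasure μ]
    (T : ℕ) (ℱ : Filtration ℕ m) (P : ℕ → Ω → ℝ)
    (hint : ∀ t ≤ T, Integrable (P t) μ)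
    (hsuper : ∀ t, 1 ≤ t → t ≤ T → (μ[P t | ℱ (t - 1)]) ≤ᵐ[μ] P (t - 1))
    (hbdd : ∀ t ≤ T, ∀ᵐ ω ∂μ, 0 ≤ P t ω ∧ P t ω ≤ 1)
    (hinit : ∀ᵐ ω ∂μ, P 0 ω = 1/2) :
    ∑ t ∈ Finset.Icc 1 T, ∫ ω, (P t ω - (μ[P t | ℱ (t - 1)]) ω) ^ 2 ∂μ ≤ 5/4 := by
  set Y : ℕ → Ω → ℝ := fun t ω => 1 - P t ω
  have hY : ∀ t ≤ T, ∀ᵐ ω ∂μ, 0 ≤ Y t ω ∧ Y t ω ≤ 1 := fun t ht => by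
    filter_upwards [hbdd t ht] with ω h
    constructor <;> linarith [h.1, h.2]
  have hL2 : ∀ t ≤ T, MemLp (Y t) 2 μ := fun t ht =>
    MemLp.of_bound (aestronglyMeasurable_const.sub (hint t ht).aestronglyMeasurable) 1 <| by
      filter_upwards [hY t ht] with ω h
      rw [Real.norm_eq_abs, abs_le]
      constructor <;> linarith [h.1, h.2]
  have hsub : ∀ t, 1 ≤ t → t ≤ T → Y (t - 1) ≤ᵐ[μ] μ[Y t | ℱ (t - 1)] := fun t h₁ h₂ => by
    filter_upwards [condExp_const_sub (ℱ.le _) (hint t h₂) 1, hsuper t h₁ h₂] with ω hω h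
    rw [hω]
    exact sub_le_sub_left h 1
  have hfinal : ∫ ω, Y T ω ^ 2 ∂μ ≤ 1 := by
    refine (integral_mono_ae (hL2 T le_rfl).integrable_sq (integrable_const 1) ?_).trans_eq
      (by simp)
    filter_upwards [hY T le_rfl] with ω h
    exact pow_le_one₀ h.1 h.2
  have hinitial : ∫ ω, Y 0 ω ^ 2 ∂μ = 1 / 4 := by
    have hsq : (fun ω => Y 0 ω ^ 2) =ᵐ[μ] fun _ => 1 / 4 :=
      hinit.mono fun ω h => by simp only [Y, h]; norm_num
    rw [integral_congr_ae hsq]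
    simp
  calc ∑ t ∈ Finset.Icc 1 T, ∫ ω, (P t ω - (μ[P t | ℱ (t - 1)]) ω) ^ 2 ∂μ
      = ∑ t ∈ Finset.Icc 1 T, ∫ ω, (Y t ω - (μ[Y t | ℱ (t - 1)]) ω) ^ 2 ∂μ :=
        Finset.sum_congr rfl fun t ht =>
          (integral_sq_const_sub_sub_condExp (ℱ.le _) (hint t (Finset.mem_Icc.1 ht).2) 1).symm
    _ ≤ ∫ ω, Y T ω ^ 2 ∂μ - ∫ ω, Y 0 ω ^ 2 ∂μ :=
        sum_integral_sq_sub_condExp_le_of_le_condExp ℱ Y T hL2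
          (fun t ht => (hY t ht).mono fun _ h => h.1) hsub
    _ ≤ 5 / 4 := by linarith

/-- For a supermartingale `(P_t)_{t=0,…,T}` with values in `[0,1]` a.s. and `P_0 = 1/2` a.s.,
`∑_{t=1}^{T} E[(P_t − E[P_t | F_{t−1}])²] ≤ 5/4`. -/
theorem supermartingale_sum_conditional_variances_le
    {Ω : Type*} [m : MeasurableSpace Ω] (μ : Measure Ω) [IsProbabilityMeasure μ]
    (T : ℕ) (ℱ : Filtration ℕ m) (P : ℕ → Ω → ℝ)
    (hadapted : ∀ t ≤ T, StronglyMeasurable[ℱ t] (P t))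
    (hint : ∀ t ≤ T, Integrable (P t) μ)
    (hsuper : ∀ t, 1 ≤ t → t ≤ T → (μ[P t | ℱ (t - 1)]) ≤ᵐ[μ] P (t - 1))
    (hbdd : ∀ t ≤ T, ∀ᵐ ω ∂μ, 0 ≤ P t ω ∧ P t ω ≤ 1)
    (hinit : ∀ᵐ ω ∂μ, P 0 ω = 1/2) :
    ∑ t ∈ Finset.Icc 1 T, ∫ ω, (P t ω - (μ[P t | ℱ (t - 1)]) ω) ^ 2 ∂μ ≤ 5/4 :=
  supermartingale_sum_conditional_variances_le_general (m := m) μ T ℱ P hint hsuper hbdd hinit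
end

section
/- Let p and q be probability mass functions on a countable set X. Then ∑_x p(x)·q(x)/(p(x) + q(x)) ≤ 1/2 − (1/4)·TV(p, q)², where the sum ranges over all x with p(x) + q(x) > 0. -/
/-!
Write `s = p + q` and `d = |p - q|`, so that `p q / s = s / 4 - d² / (4 s)`. The tangent-line
bound `d² / s ≥ t d - t² s / 4`, i.e. `(d - t s / 2)² ≥ 0`, is linear in `(s, d)`, so it sums to
`∑ p q / s ≤ 1/2 + t² / 8 - t T / 4` with `T = ∑ d`; the choice `t = T` gives `1/2 - T² / 8`.
-/

lemma mul_div_add_le_left {a b : ℝ} (ha : 0 ≤ a) (hb : 0 ≤ b) : a * b / (a + b) ≤ a := by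
  rw [mul_div_assoc]
  exact mul_le_of_le_one_right ha (div_le_one_of_le₀ (le_add_of_nonneg_left ha) (add_nonneg ha hb))

lemma mul_div_add_le_tangent {a b : ℝ} (ha : 0 ≤ a) (hb : 0 ≤ b) (t : ℝ) :
    a * b / (a + b) ≤ (1/4 + t ^ 2 / 16) * (a + b) - t / 4 * |a - b| := by
  rcases (add_nonneg ha hb).eq_or_lt with hs | hs
  · obtain ⟨rfl, rfl⟩ : a = 0 ∧ b = 0 := ⟨by linarith, by linarith⟩
    simp
  · rw [div_le_iff₀ hs]
    nlinarith [sq_nonneg (|a - b| - t * (a + b) / 2), sq_abs (a - b)]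

lemma tsum_mul_div_add_le {X : Type*} {p q : X → ℝ} (hp : ∀ x, 0 ≤ p x) (hq : ∀ x, 0 ≤ q x)
    (hps : HasSum p 1) (hqs : HasSum q 1) (t : ℝ) :
    ∑' x, p x * q x / (p x + q x) ≤ 1/2 + t ^ 2 / 8 - t / 4 * ∑' x, |p x - q x| := by
  have hpq : Summable fun x => p x * q x / (p x + q x) :=
    hps.summable.of_nonneg_of_le (fun x => div_nonneg (mul_nonneg (hp x) (hq x))
      (add_nonneg (hp x) (hq x))) fun x => mul_div_add_le_left (hp x) (hq x)
  have hd : Summable fun x => |p x - q x| := (hps.summable.sub hqs.summable).abs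
  have hbound := ((hps.add hqs).mul_left (1/4 + t ^ 2 / 16)).sub (hd.hasSum.mul_left (t / 4))
  have := hasSum_le (fun x => mul_div_add_le_tangent (hp x) (hq x) t) hpq.hasSum hbound
  linarith

theorem sum_harmonic_like_le_half_sub_tv_sq_general {X : Type*}
    (p q : X → ℝ)
    (hp : ∀ x, 0 ≤ p x) (hq : ∀ x, 0 ≤ q x)
    (hps : HasSum p 1) (hqs : HasSum q 1) :
    ∑' x, p x * q x / (p x + q x)
      ≤ 1/2 - (1/4) * ((1/2) * ∑' x, |p x - q x|) ^ 2 := by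
  have := tsum_mul_div_add_le hp hq hps hqs (∑' x, |p x - q x|)
  nlinarith [sq_nonneg (∑' x, |p x - q x|)]

/-- For probability mass functions `p`, `q` on a countable set `X`,
`∑_x p(x)·q(x)/(p(x)+q(x)) ≤ 1/2 − (1/4)·TV(p,q)²`
(terms with `p x + q x = 0` contribute `0`). -/
theorem sum_harmonic_like_le_half_sub_tv_sq {X : Type*} [Countable X]
    (p q : X → ℝ)
    (hp : ∀ x, 0 ≤ p x) (hq : ∀ x, 0 ≤ q x)
    (hps : HasSum p 1) (hqs : HasSum q 1) :
    ∑' x, p x * q x / (p x + q x)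
      ≤ 1/2 - (1/4) * ((1/2) * ∑' x, |p x - q x|) ^ 2 :=
  sum_harmonic_like_le_half_sub_tv_sq_general p q hp hq hps hqs
end

section
/- Let f0 and f1 be probability mass functions on a countable set X and let p ∈ [0, 1]. Then ∑_x f1(x) · (2·p·f1(x)) / ((1+p)·f1(x) + (1−p)·f0(x)) ≥ p, where terms with zero denominator are interpreted as 0. -/
/-! The tangent-line bound `a² / d ≥ a - d / 4`, i.e. `(a - d / 2)² ≥ 0`, summed with `a = f1` and
`d = (1 + p) f1 + (1 - p) f0`, whose total mass is `2`, gives `∑ f1² / d ≥ 1 - 2 / 4 = 1 / 2`. -/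

lemma sub_div_four_le_sq_div {a d : ℝ} (hd : 0 ≤ d) (had : a ≤ d) : a - d / 4 ≤ a ^ 2 / d := by
  rcases hd.eq_or_lt with rfl | hd
  · simpa using had
  · rw [le_div_iff₀ hd]
    nlinarith [sq_nonneg (a - d / 2)]

lemma sq_div_le_self {a d : ℝ} (ha : 0 ≤ a) (had : a ≤ d) : a ^ 2 / d ≤ a := by
  rcases (ha.trans had).eq_or_lt with hd | hd
  · simp [← hd, ha]
  · rw [div_le_iff₀ hd]
    nlinarith

lemma sub_div_four_le_tsum_sq_div {X : Type*} {a d : X → ℝ} {A B : ℝ}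
    (ha : ∀ x, 0 ≤ a x) (had : ∀ x, a x ≤ d x) (hA : HasSum a A) (hB : HasSum d B) :
    A - B / 4 ≤ ∑' x, a x ^ 2 / d x := by
  have hlower : HasSum (fun x ↦ a x - d x / 4) (A - B / 4) := hA.sub (hB.div_const 4)
  have hsummable : Summable (fun x ↦ a x ^ 2 / d x) :=
    hA.summable.of_nonneg_of_le (fun x ↦ div_nonneg (sq_nonneg _) ((ha x).trans (had x)))
      (fun x ↦ sq_div_le_self (ha x) (had x))
  exact hlower.tsum_eq ▸ hlower.summable.tsum_le_tsum
    (fun x ↦ sub_div_four_le_sq_div ((ha x).trans (had x)) (had x)) hsummable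

theorem sum_posterior_under_f1_ge_general {X : Type*}
    (f0 f1 : X → ℝ)
    (h0 : ∀ x, 0 ≤ f0 x) (h1 : ∀ x, 0 ≤ f1 x)
    (h0s : HasSum f0 1) (h1s : HasSum f1 1)
    (p : ℝ) (hp0 : 0 ≤ p) (hp1 : p ≤ 1) :
    ∑' x, f1 x * (2 * p * f1 x) / ((1 + p) * f1 x + (1 - p) * f0 x) ≥ p := by
  set d : X → ℝ := fun x ↦ (1 + p) * f1 x + (1 - p) * f0 x
  have hd : HasSum d 2 := by
    have h := (h1s.mul_left (1 + p)).add (h0s.mul_left (1 - p))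
    rwa [show (1 + p) * 1 + (1 - p) * 1 = (2 : ℝ) by ring] at h
  have hf1d : ∀ x, f1 x ≤ d x := fun x ↦ by
    nlinarith [h1 x, mul_nonneg hp0 (h1 x), mul_nonneg (sub_nonneg.2 hp1) (h0 x)]
  have hhalf : 1 / 2 ≤ ∑' x, f1 x ^ 2 / d x := by
    linarith [sub_div_four_le_tsum_sq_div h1 hf1d h1s hd]
  calc p ≤ 2 * p * ∑' x, f1 x ^ 2 / d x := by nlinarith
    _ = ∑' x, f1 x * (2 * p * f1 x) / d x := by
      rw [← tsum_mul_left]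
      congr 1 with x
      ring

/-- For probability mass functions `f0`, `f1` on a countable set `X` and `p ∈ [0,1]`,
`∑_x f1(x) · (2·p·f1(x)) / ((1+p)·f1(x) + (1−p)·f0(x)) ≥ p`
(terms with zero denominator are `0`, as division by zero is `0` in Lean). -/
theorem sum_posterior_under_f1_ge {X : Type*} [Countable X]
    (f0 f1 : X → ℝ)
    (h0 : ∀ x, 0 ≤ f0 x) (h1 : ∀ x, 0 ≤ f1 x)
    (h0s : HasSum f0 1) (h1s : HasSum f1 1)
    (p : ℝ) (hp0 : 0 ≤ p) (hp1 : p ≤ 1) :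
    ∑' x, f1 x * (2 * p * f1 x) / ((1 + p) * f1 x + (1 - p) * f0 x) ≥ p :=
  sum_posterior_under_f1_ge_general f0 f1 h0 h1 h0s h1s p hp0 hp1
end

section
/- Let f0 and f1 be probability mass functions on a countable set X and let p ∈ [0, 1]. Then ∑_x ((f0(x) + f1(x))/2) · (2·p·f1(x)) / ((1+p)·f1(x) + (1−p)·f0(x)) ≤ p, where terms with zero denominator are interpreted as 0. -/
/-!
Pointwise, with `s = f₀ + f₁` and `d = f₁ - f₀`, the summand is
`p s (s + d) / (2 (s + p d))`, and `(s + p d)(s + (1 - p) d) = s (s + d) + p (1 - p) d²`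
bounds it by `p (s + (1 - p) d) / 2 = p (p s / 2 + (1 - p) f₁)`, whose sum over `X` is
`p (p + 1 - p) = p`.
-/

lemma posterior_term_le_affine {a c p : ℝ} (ha : 0 ≤ a) (hc : 0 ≤ c) (hp0 : 0 ≤ p)
    (hp1 : p ≤ 1) :
    (c + a) / 2 * (2 * p * a) / ((1 + p) * a + (1 - p) * c) ≤
      p * (p * ((c + a) / 2) + (1 - p) * a) := by
  have hq : 0 ≤ 1 - p := sub_nonneg.2 hp1
  rcases (by positivity : 0 ≤ (1 + p) * a + (1 - p) * c).eq_or_lt with hD | hD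
  · rw [← hD, div_zero]
    positivity
  · rw [div_le_iff₀ hD]
    nlinarith [mul_nonneg (mul_nonneg hp0 hq) (mul_nonneg hp0 (sq_nonneg (a - c)))]

lemma posterior_term_nonneg {a c p : ℝ} (ha : 0 ≤ a) (hc : 0 ≤ c) (hp0 : 0 ≤ p)
    (hp1 : p ≤ 1) :
    0 ≤ (c + a) / 2 * (2 * p * a) / ((1 + p) * a + (1 - p) * c) := by
  have hq : 0 ≤ 1 - p := sub_nonneg.2 hp1
  positivity

theorem sum_posterior_under_mixture_le_general {X : Type*}
    (f0 f1 : X → ℝ)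
    (h0 : ∀ x, 0 ≤ f0 x) (h1 : ∀ x, 0 ≤ f1 x)
    (h0s : HasSum f0 1) (h1s : HasSum f1 1)
    (p : ℝ) (hp0 : 0 ≤ p) (hp1 : p ≤ 1) :
    ∑' x, ((f0 x + f1 x) / 2) * (2 * p * f1 x) / ((1 + p) * f1 x + (1 - p) * f0 x) ≤ p := by
  have hbound : HasSum (fun x => p * (p * ((f0 x + f1 x) / 2) + (1 - p) * f1 x))
      (p * (p * ((1 + 1) / 2) + (1 - p) * 1)) :=
    ((((h0s.add h1s).div_const 2).mul_left p).add (h1s.mul_left (1 - p))).mul_left p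
  have hle x := posterior_term_le_affine (h1 x) (h0 x) hp0 hp1
  have hsum := hbound.summable.of_nonneg_of_le
    (fun x => posterior_term_nonneg (h1 x) (h0 x) hp0 hp1) hle
  calc _ ≤ p * (p * ((1 + 1) / 2) + (1 - p) * 1) := hasSum_le hle hsum.hasSum hbound
    _ = p := by ring

/-- For probability mass functions `f0`, `f1` on a countable set `X` and `p ∈ [0,1]`,
`∑_x ((f0(x)+f1(x))/2) · (2·p·f1(x)) / ((1+p)·f1(x) + (1−p)·f0(x)) ≤ p`
(terms with zero denominator are `0`, as division by zero is `0` in Lean). -/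
theorem sum_posterior_under_mixture_le {X : Type*} [Countable X]
    (f0 f1 : X → ℝ)
    (h0 : ∀ x, 0 ≤ f0 x) (h1 : ∀ x, 0 ≤ f1 x)
    (h0s : HasSum f0 1) (h1s : HasSum f1 1)
    (p : ℝ) (hp0 : 0 ≤ p) (hp1 : p ≤ 1) :
    ∑' x, ((f0 x + f1 x) / 2) * (2 * p * f1 x) / ((1 + p) * f1 x + (1 - p) * f0 x) ≤ p :=
  sum_posterior_under_mixture_le_general f0 f1 h0 h1 h0s h1s p hp0 hp1
end
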